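/- Let t_m be one of the word functions i_m with m ≥ 2 or h_m with m ≥ 3. Let n ≥ 5 and for each 1 ≤ i < j ≤ n let w_{ij} be a word over X_n with c(w_{ij}) = X_n \ {x_i}, satisfying the t_m-consistency conditions: t_m((w_{ij})^{(pq)}) = t_m((w_{pq})^{(ij)}) for all pairwise distinct i, j, p, q with i < j, p < q, and t_m((w_{ij})^{(jk)}) = t_m((w_{jk})^{(ik)}) = t_m((w_{ik})^{(jk)}) for all i < j < k. Let l ∈ {1,…,n} be such that σ(w_{ij}) = x_l for all 1 ≤ i < j ≤ n with l ∉ {i,j} (such an l exists, namely l = π(n) for the associated permutation π of the scheme). Then the family {s(w_{ij}) : 1 ≤ i < j ≤ n, l ∉ {i,j}} is an (n−1)-scheme over the variables X_n \ {x_l}: (a) c(s(w_{ij})) = X_n \ {x_i, x_l}; (b) t_m(s(w_{ij})^{(pq)}) = t_m(s(w_{pq})^{(ij)}) for all pairwise distinct i, j, p, q with i < j, p < q and l ∉ {i,j,p,q}; (c) t_m(s(w_{ij})^{(jk)}) = t_m(s(w_{jk})^{(ik)}) = t_m(s(w_{ik})^{(jk)}) for all i < j < k with l ∉ {i,j,k}.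 -/

import Mathlib

/-! ### Words and word functions -/

/-- The word `w^{(i j)}`: replace every occurrence of the letter `i` by `j`. -/
def subst {X : Type*} [DecidableEq X] (w : List X) (i j : X) : List X :=
  w.map fun t => if t = i then j else t

/-- The prefix `s(w)`: the longest prefix of `w` containing all but one of the
letters of `c(w)` (the empty word if `w` is empty). -/
def wordS {X : Type*} [DecidableEq X] (w : List X) : List X :=
  w.take (w.toFinset.sup fun x => w.idxOf x)

/-- The letter `σ(w)` (the last letter of `w` to occur from the left), as a word of
length at most one; `s(w) ++ σ(w)` is the shortest prefix of `w` with full content. -/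
def wordSigma {X : Type*} [DecidableEq X] (w : List X) : List X :=
  (w.drop (w.toFinset.sup fun x => w.idxOf x)).take 1

/-- The suffix `e(w)`, dual to `s(w)`. -/
def wordE {X : Type*} [DecidableEq X] (w : List X) : List X :=
  (wordS w.reverse).reverse

/-- The letter `ε(w)` (as a word of length at most one), dual to `σ(w)`. -/
def wordEps {X : Type*} [DecidableEq X] (w : List X) : List X :=
  (wordSigma w.reverse).reverse

/-- The initial part `i₂(w)`: retain only the first occurrence from the left of
each letter of `w`. -/
def initPart {X : Type*} [DecidableEq X] (w : List X) : List X :=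
  w.reverse.dedup.reverse

/-- The dual `F̄` of a word function `F`: `F̄(w) = reverse (F (reverse w))`. -/
def dualW {X : Type*} (F : List X → List X) (w : List X) : List X :=
  (F w.reverse).reverse

theorem wordS_length_lt {X : Type*} [DecidableEq X] {w : List X} (hw : w ≠ []) :
    (wordS w).length < w.length := by
  have hpos : 0 < w.length := List.length_pos_iff.mpr hw
  have hk : (w.toFinset.sup fun x => w.idxOf x) < w.length := by
    rw [Finset.sup_lt_iff hpos]
    intro x hx
    exact List.idxOf_lt_length_iff.mpr (List.mem_toFinset.mp hx)
  simp only [wordS, List.length_take]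
  omega

/-- The common recursion defining the word functions `h_m` and `i_m` of Gerhard
and Petrich: `t_m(w) = t_m(s(w)) · σ(w) · t̄_{m-1}(w)` for `m ≥ 3`, where the base
function (`h₂` = first letter, `i₂` = initial part) is a parameter, and all
functions send the empty word to the empty word. -/
def tW {X : Type*} [DecidableEq X] (base : List X → List X) : ℕ → List X → List X
  | m, w =>
    if hw : w = [] then []
    else if hm : m ≤ 2 then base w
    else tW base m (wordS w) ++ wordSigma w ++ (tW base (m - 1) w.reverse).reverse
termination_by m w => m + w.length
decreasing_by
  · have := wordS_length_lt hw; omega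
  · simp only [List.unattach_reverse, List.unattach_attach, List.length_reverse]; omega

/-- The word function `h_m` (`m ≥ 2`): `h₂(w)` is the first letter of `w`, and
`h_m(w) = h_m(s(w)) · σ(w) · h̄_{m-1}(w)` for `m ≥ 3`. -/
def hW {X : Type*} [DecidableEq X] : ℕ → List X → List X :=
  tW fun w => w.take 1

/-- The word function `i_m` (`m ≥ 2`): `i₂(w)` is the initial part of `w`, and
`i_m(w) = i_m(s(w)) · σ(w) · ī_{m-1}(w)` for `m ≥ 3`. -/
def iW {X : Type*} [DecidableEq X] : ℕ → List X → List X :=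
  tW initPart

/-! ### Operations induced by words -/

/-- Evaluation of a word `w` over the alphabet `X` in a semigroup `S` under the
assignment `a : X → S`, computed in the monoid `WithOne S` (so that the empty word
evaluates to `1` and a nonempty word to the coercion of its value in `S`). -/
def evalW {X S : Type*} [Semigroup S] (a : X → S) (w : List X) : WithOne S :=
  (w.map fun t => (a t : WithOne S)).prod

/-- The identification minor `f_{i j}` of an `n`-ary operation: the `i`-th argument
is replaced by the `j`-th. -/
def minor {α β : Type*} {n : ℕ} (f : (Fin n → α) → β) (i j : Fin n) :
    (Fin n → α) → β :=
  fun a => f (Function.update a i (a j))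

/-- `f` depends on its `i`-th variable. -/
def DependsOnVar {α β : Type*} {n : ℕ} (f : (Fin n → α) → β) (i : Fin n) : Prop :=
  ∃ a b : Fin n → α, (∀ k : Fin n, k ≠ i → a k = b k) ∧ f a ≠ f b

/-- `f : Sⁿ → S` is induced by a (nonempty) word over `X_n = {x_1, …, x_n}`. -/
def InducedByWord {S : Type*} [Semigroup S] {n : ℕ} (f : (Fin n → S) → S) : Prop :=
  ∃ w : List (Fin n), w ≠ [] ∧ ∀ a : Fin n → S, (f a : WithOne S) = evalW a w

/-!
A nonempty word factors uniquely as `w = A · l · B` with `l ∉ c(A)` and `c(B) ⊆ c(A) ∪ {l}`,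
namely `A = s(w)` and `l = σ(w)`. For `m ≥ 3` the word `t_m(w) = t_m(s(w)) σ(w) t̄_{m-1}(w)` is
such a factorisation, because `t_m` preserves content; and `i₂(w) = i₂(s(w)) σ(w)`. Hence
`s(t_m(w)) = t_m(s(w))`. Similarly the substitution `x_p ↦ x_q` maps the factorisation of `w` to
that of `w^{(pq)}` as long as `σ(w) ∉ {x_p, x_q}`, so it commutes with `s`. Applying `s` to both
sides of each consistency condition of the scheme `{w_{ij}}` then gives the consistency
conditions of `{s(w_{ij})}`.
-/

section WordS

variable {X : Type*} [DecidableEq X]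

lemma sup_idxOf_append_cons {A B : List X} {l : X} (hl : l ∉ A) (hB : B ⊆ l :: A) :
    ((A ++ l :: B).toFinset.sup fun x => (A ++ l :: B).idxOf x) = A.length := by
  have hidx_l : (A ++ l :: B).idxOf l = A.length := by
    rw [List.idxOf_append_of_notMem hl, List.idxOf_cons_self, Nat.add_zero]
  refine le_antisymm (Finset.sup_le fun x hx => ?_)
    (hidx_l ▸ Finset.le_sup (f := fun x => (A ++ l :: B).idxOf x) (by simp))
  have hx : x ∈ l :: A := by
    simp only [List.mem_toFinset, List.mem_append, List.mem_cons] at hx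
    rcases hx with hx | rfl | hx
    exacts [List.mem_cons_of_mem l hx, List.mem_cons_self, hB hx]
  rcases List.mem_cons.mp hx with rfl | hx
  · exact hidx_l.le
  · rw [List.idxOf_append_of_mem hx]
    exact (List.idxOf_lt_length_of_mem hx).le

lemma wordS_append_cons {A B : List X} {l : X} (hl : l ∉ A) (hB : B ⊆ l :: A) :
    wordS (A ++ l :: B) = A := by
  rw [wordS, sup_idxOf_append_cons hl hB, List.take_left]

lemma wordSigma_append_cons {A B : List X} {l : X} (hl : l ∉ A) (hB : B ⊆ l :: A) :
    wordSigma (A ++ l :: B) = [l] := by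
  rw [wordSigma, sup_idxOf_append_cons hl hB, List.drop_left]
  rfl

lemma exists_eq_wordS_append_cons {w : List X} (hw : w ≠ []) :
    ∃ l B, wordSigma w = [l] ∧ w = wordS w ++ l :: B ∧ l ∉ wordS w ∧
      B ⊆ l :: wordS w := by
  obtain ⟨l, hlw, hsup⟩ := Finset.exists_mem_eq_sup w.toFinset
    ((List.toFinset_nonempty_iff w).mpr hw) fun x => w.idxOf x
  rw [List.mem_toFinset] at hlw
  have hS : wordS w = w.take (w.idxOf l) := by rw [wordS, hsup]
  have hsplit : w = wordS w ++ l :: w.drop (w.idxOf l + 1) := by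
    nth_rw 1 [hS, ← List.take_append_drop (w.idxOf l) w]
    rw [List.drop_eq_getElem_cons (List.idxOf_lt_length_of_mem hlw), List.getElem_idxOf]
  have hl : l ∉ wordS w := by
    rw [hS, List.mem_take_iff_idxOf_lt hlw]
    exact lt_irrefl _
  have hB : w.drop (w.idxOf l + 1) ⊆ l :: wordS w := by
    intro x hx
    have hxw : x ∈ w := List.mem_of_mem_drop hx
    have hxl : w.idxOf x ≤ w.idxOf l := hsup ▸ Finset.le_sup (f := fun x => w.idxOf x)
      (List.mem_toFinset.mpr hxw)
    rcases hxl.lt_or_eq with hlt | heq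
    · rw [hS]
      exact List.mem_cons_of_mem l ((List.mem_take_iff_idxOf_lt hxw).mpr hlt)
    · rw [(List.idxOf_inj hxw).mp heq]
      exact List.mem_cons_self
  refine ⟨l, _, ?_, hsplit, hl, hB⟩
  rw [hsplit]
  exact wordSigma_append_cons hl hB

lemma eq_wordS_append_cons_of_wordSigma_eq {w : List X} {l : X} (hσ : wordSigma w = [l]) :
    ∃ B, w = wordS w ++ l :: B ∧ l ∉ wordS w ∧ B ⊆ l :: wordS w := by
  have hw : w ≠ [] := by
    rintro rfl
    exact List.cons_ne_nil l [] hσ.symm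
  obtain ⟨l', B, hσ', h⟩ := exists_eq_wordS_append_cons hw
  obtain rfl : l' = l := List.singleton_inj.mp (hσ'.symm.trans hσ)
  exact ⟨B, h⟩

lemma subset_cons_wordS {w : List X} {l : X} (hσ : wordSigma w = [l]) : w ⊆ l :: wordS w := by
  obtain ⟨B, hw, -, hB⟩ := eq_wordS_append_cons_of_wordSigma_eq hσ
  intro x hx
  rw [hw, List.mem_append, List.mem_cons] at hx
  rcases hx with hx | rfl | hx
  exacts [List.mem_cons_of_mem _ hx, List.mem_cons_self, hB hx]

lemma toFinset_wordS {w : List X} {l : X} (hσ : wordSigma w = [l]) :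
    (wordS w).toFinset = w.toFinset.erase l := by
  obtain ⟨-, -, hl, -⟩ := eq_wordS_append_cons_of_wordSigma_eq hσ
  ext x
  simp only [List.mem_toFinset, Finset.mem_erase]
  refine ⟨fun hx => ⟨ne_of_mem_of_not_mem hx hl, List.mem_of_mem_take hx⟩,
    fun ⟨hxl, hxw⟩ => ?_⟩
  exact (List.mem_cons.mp (subset_cons_wordS hσ hxw)).resolve_left hxl

lemma wordS_map {Y : Type*} [DecidableEq Y] (f : X → Y) {w : List X} {l : X}
    (hσ : wordSigma w = [l]) (hf : ∀ x ∈ wordS w, f x ≠ f l) :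
    wordS (w.map f) = (wordS w).map f := by
  obtain ⟨B, hw, hl, hB⟩ := eq_wordS_append_cons_of_wordSigma_eq hσ
  conv_lhs => rw [hw, List.map_append, List.map_cons]
  refine wordS_append_cons ?_ (List.map_subset f hB)
  simp only [List.mem_map, not_exists, not_and]
  exact hf

lemma wordS_subst {w : List X} {l p q : X} (hσ : wordSigma w = [l]) (hp : l ≠ p) (hq : l ≠ q) :
    wordS (subst w p q) = subst (wordS w) p q := by
  obtain ⟨-, -, hl, -⟩ := eq_wordS_append_cons_of_wordSigma_eq hσ
  refine wordS_map _ hσ fun x hx => ?_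
  simp only [if_neg hp]
  split_ifs with hxp
  exacts [hq.symm, ne_of_mem_of_not_mem hx hl]

end WordS

section WordFunctions

variable {X : Type*} [DecidableEq X] {base : List X → List X}

lemma tW_nil (m : ℕ) : tW base m [] = [] := by
  rw [tW, dif_pos rfl]

lemma tW_of_le_two {m : ℕ} (hm : m ≤ 2) (hbase : base [] = []) (w : List X) :
    tW base m w = base w := by
  rw [tW]
  split_ifs with hw
  · rw [hw, hbase]
  · rfl

lemma tW_of_ne_nil {m : ℕ} (hm : 3 ≤ m) {w : List X} (hw : w ≠ []) :
    tW base m w = tW base m (wordS w) ++ wordSigma w ++ (tW base (m - 1) w.reverse).reverse := by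
  rw [tW, dif_neg hw, dif_neg (by omega)]

lemma tW_subset (hbase : ∀ v, base v ⊆ v) (m : ℕ) (w : List X) : tW base m w ⊆ w := by
  induction m, w using tW.induct with
  | case1 m => simp [tW_nil]
  | case2 m w hw hm => rw [tW, dif_neg hw, dif_pos hm]; exact hbase w
  | case3 m w hw hm ihS ihRev =>
    rw [tW, dif_neg hw, dif_neg hm]
    simp only [List.unattach_reverse, List.unattach_attach] at ihRev
    refine List.append_subset.mpr ⟨List.append_subset.mpr ⟨?_, ?_⟩, ?_⟩
    · exact List.Subset.trans ihS (List.take_subset _ _)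
    · exact List.Subset.trans (List.take_subset _ _) (List.drop_subset _ _)
    · intro x hx
      simpa using ihRev (List.mem_reverse.mp hx)

lemma subset_tW {m : ℕ} (hm : 3 ≤ m) (w : List X) : w ⊆ tW base m w := by
  induction m, w using tW.induct with
  | case1 m => exact List.nil_subset _
  | case2 => omega
  | case3 m w hw _ ihS =>
    obtain ⟨l, -, hσ, -⟩ := exists_eq_wordS_append_cons hw
    rw [tW_of_ne_nil hm hw, hσ]
    intro x hx
    rcases List.mem_cons.mp (subset_cons_wordS hσ hx) with rfl | hx
    · simp
    · simp [ihS hm hx]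

lemma wordS_tW (hbase : ∀ v, base v ⊆ v) {m : ℕ} (hm : 3 ≤ m) (w : List X) :
    wordS (tW base m w) = tW base m (wordS w) := by
  rcases eq_or_ne w [] with rfl | hw
  · rw [tW_nil]
    exact (tW_nil m).symm
  obtain ⟨l, -, hσ, -, hl, -⟩ := exists_eq_wordS_append_cons hw
  rw [tW_of_ne_nil hm hw, hσ, List.append_assoc, List.singleton_append]
  refine wordS_append_cons (fun h => hl (tW_subset hbase _ _ h)) fun x hx => ?_
  have hxw : x ∈ w := by simpa using tW_subset hbase _ _ (List.mem_reverse.mp hx)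
  exact List.cons_subset_cons l (subset_tW hm _) (subset_cons_wordS hσ hxw)

lemma initPart_append_cons {A B : List X} {l : X} (hl : l ∉ A) (hB : B ⊆ l :: A) :
    initPart (A ++ l :: B) = initPart A ++ [l] := by
  have hB' : B.reverse ⊆ l :: A.reverse.dedup := fun x hx => by
    simpa [List.mem_dedup] using hB (List.mem_reverse.mp hx)
  rw [initPart, initPart, List.reverse_append, List.reverse_cons, List.append_assoc,
    List.singleton_append, List.dedup_append, List.dedup_cons_of_notMem (by simpa using hl),
    List.Subset.union_eq_right hB', List.reverse_cons]

lemma wordS_initPart (w : List X) : wordS (initPart w) = initPart (wordS w) := by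
  rcases eq_or_ne w [] with rfl | hw
  · rfl
  obtain ⟨l, B, -, hwB, hl, hB⟩ := exists_eq_wordS_append_cons hw
  have hl' : l ∉ initPart (wordS w) := by simpa [initPart, List.mem_dedup] using hl
  rw [hwB, initPart_append_cons hl hB, wordS_append_cons hl' (List.nil_subset _),
    wordS_append_cons hl hB]

lemma wordS_iW {m : ℕ} (hm : 2 ≤ m) (w : List X) : wordS (iW m w) = iW m (wordS w) := by
  rcases hm.eq_or_lt with rfl | hm
  · rw [iW, tW_of_le_two le_rfl rfl, tW_of_le_two le_rfl rfl, wordS_initPart]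
  · exact wordS_tW (fun v x hx => by simpa [initPart, List.mem_dedup] using hx) hm w

lemma wordS_hW {m : ℕ} (hm : 3 ≤ m) (w : List X) : wordS (hW m w) = hW m (wordS w) :=
  wordS_tW (fun v => List.take_subset 1 v) hm w

lemma apply_subst_wordS_eq_of_apply_subst_eq {t : List X → List X}
    (ht : ∀ u, wordS (t u) = t (wordS u))
    {u v : List X} {l p q p' q' : X} (hu : wordSigma u = [l]) (hv : wordSigma v = [l])
    (hp : l ≠ p) (hq : l ≠ q) (hp' : l ≠ p') (hq' : l ≠ q')
    (h : t (subst u p q) = t (subst v p' q')) :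
    t (subst (wordS u) p q) = t (subst (wordS v) p' q') := by
  rw [← wordS_subst hu hp hq, ← wordS_subst hv hp' hq', ← ht, ← ht, h]

end WordFunctions

theorem s_scheme_of_scheme_general (n : ℕ)
    (t : List (Fin n) → List (Fin n))
    (ht : (∃ m : ℕ, 2 ≤ m ∧ t = iW m) ∨ (∃ m : ℕ, 3 ≤ m ∧ t = hW m))
    (w : Fin n → Fin n → List (Fin n))
    (hc : ∀ i j : Fin n, i < j → (w i j).toFinset = Finset.univ \ {i})
    (hC1 : ∀ i j p q : Fin n, i < j → p < q → i ≠ p → i ≠ q → j ≠ p → j ≠ q →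
      t (subst (w i j) p q) = t (subst (w p q) i j))
    (hC2 : ∀ i j k : Fin n, i < j → j < k →
      t (subst (w i j) j k) = t (subst (w j k) i k) ∧
      t (subst (w j k) i k) = t (subst (w i k) j k))
    (l : Fin n)
    (hl : ∀ i j : Fin n, i < j → l ≠ i → l ≠ j → wordSigma (w i j) = [l]) :
    (∀ i j : Fin n, i < j → l ≠ i → l ≠ j →
      (wordS (w i j)).toFinset = Finset.univ \ {i, l}) ∧
    (∀ i j p q : Fin n, i < j → p < q → i ≠ p → i ≠ q → j ≠ p → j ≠ q →
      l ≠ i → l ≠ j → l ≠ p → l ≠ q →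
      t (subst (wordS (w i j)) p q) = t (subst (wordS (w p q)) i j)) ∧
    (∀ i j k : Fin n, i < j → j < k → l ≠ i → l ≠ j → l ≠ k →
      t (subst (wordS (w i j)) j k) = t (subst (wordS (w j k)) i k) ∧
      t (subst (wordS (w j k)) i k) = t (subst (wordS (w i k)) j k)) := by
  have hts : ∀ u, wordS (t u) = t (wordS u) := by
    rcases ht with ⟨m, hm, rfl⟩ | ⟨m, hm, rfl⟩
    exacts [wordS_iW hm, wordS_hW hm]
  refine ⟨fun i j hij hli hlj => ?_, fun i j p q hij hpq hip hiq hjp hjq hli hlj hlp hlq => ?_,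
    fun i j k hij hjk hli hlj hlk => ?_⟩
  · rw [toFinset_wordS (hl i j hij hli hlj), hc i j hij, ← Finset.sdiff_insert, Finset.pair_comm]
  · exact apply_subst_wordS_eq_of_apply_subst_eq hts (hl i j hij hli hlj) (hl p q hpq hlp hlq)
      hlp hlq hli hlj (hC1 i j p q hij hpq hip hiq hjp hjq)
  · have hσij := hl i j hij hli hlj
    have hσjk := hl j k hjk hlj hlk
    have hσik := hl i k (hij.trans hjk) hli hlk
    obtain ⟨h₁, h₂⟩ := hC2 i j k hij hjk
    exact ⟨apply_subst_wordS_eq_of_apply_subst_eq hts hσij hσjk hlj hlk hli hlk h₁,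
      apply_subst_wordS_eq_of_apply_subst_eq hts hσjk hσik hli hlk hlj hlk h₂⟩

/-- Let `t` be one of the word functions `i_m` (`m ≥ 2`) or `h_m`
(`m ≥ 3`). If `{w_{ij}}` (`n ≥ 5`) is an essential scheme satisfying the
`t`-consistency conditions, and `l` is such that `σ(w_{ij}) = x_l` whenever
`l ∉ {i,j}`, then `{s(w_{ij}) : i < j, l ∉ {i,j}}` is an `(n−1)`-scheme over the
variables `X_n \ {x_l}`: its members have content `X_n \ {x_i, x_l}` and they
satisfy the `t`-consistency conditions (C1) and (C2). -/
theorem s_scheme_of_scheme (n : ℕ) (hn : 5 ≤ n)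
    (t : List (Fin n) → List (Fin n))
    (ht : (∃ m : ℕ, 2 ≤ m ∧ t = iW m) ∨ (∃ m : ℕ, 3 ≤ m ∧ t = hW m))
    (w : Fin n → Fin n → List (Fin n))
    (hc : ∀ i j : Fin n, i < j → (w i j).toFinset = Finset.univ \ {i})
    (hC1 : ∀ i j p q : Fin n, i < j → p < q → i ≠ p → i ≠ q → j ≠ p → j ≠ q →
      t (subst (w i j) p q) = t (subst (w p q) i j))
    (hC2 : ∀ i j k : Fin n, i < j → j < k →
      t (subst (w i j) j k) = t (subst (w j k) i k) ∧
      t (subst (w j k) i k) = t (subst (w i k) j k))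
    (l : Fin n)
    (hl : ∀ i j : Fin n, i < j → l ≠ i → l ≠ j → wordSigma (w i j) = [l]) :
    (∀ i j : Fin n, i < j → l ≠ i → l ≠ j →
      (wordS (w i j)).toFinset = Finset.univ \ {i, l}) ∧
    (∀ i j p q : Fin n, i < j → p < q → i ≠ p → i ≠ q → j ≠ p → j ≠ q →
      l ≠ i → l ≠ j → l ≠ p → l ≠ q →
      t (subst (wordS (w i j)) p q) = t (subst (wordS (w p q)) i j)) ∧
    (∀ i j k : Fin n, i < j → j < k → l ≠ i → l ≠ j → l ≠ k →
      t (subst (wordS (w i j)) j k) = t (subst (wordS (w j k)) i k) ∧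
      t (subst (wordS (w j k)) i k) = t (subst (wordS (w i k)) j k)) :=
  s_scheme_of_scheme_general n t ht w hc hC1 hC2 l hl
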